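/- For each i ≥ 1, the set C_i = {t^{kα₁+iα₂}s₁, t^{−iα₁+kα₂}s₂, t^{kα₁+(k−i)α₂}s₁s₂s₁ : k ∈ ℤ} is a single W̃-conjugacy class in the affine Weyl group W_a of type A₂, and the minimal length of an element of C_i equals 3i if i is odd and 3i + 1 if i is even. -/

import Mathlib

namespace A2

/-- Bundled data for the extended affine Weyl group `W̃ = P ⋊ W` of type `A₂` (for `PGL₃`),
presented as `W̃ = W_a ⋊ Ω` with simple reflections `s0, s1, s2`, length-zero element `tau`
generating `Ω ≅ ℤ/3`, translations `t (m, n) = t^(m α₁ + n α₂)` for coroot-lattice elements,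
and the Iwahori–Matsumoto length function `len`. -/
class A2Data (G : Type*) [Group G] where
  s0 : G
  s1 : G
  s2 : G
  tau : G
  t : ℤ × ℤ → G
  len : G → ℕ
  s0_sq : s0 * s0 = 1
  s1_sq : s1 * s1 = 1
  s2_sq : s2 * s2 = 1
  braid01 : (s0 * s1) ^ 3 = 1
  braid12 : (s1 * s2) ^ 3 = 1
  braid02 : (s0 * s2) ^ 3 = 1
  tau_cube : tau ^ 3 = 1
  tau_s0 : tau * s0 * tau⁻¹ = s1
  tau_s1 : tau * s1 * tau⁻¹ = s2
  tau_s2 : tau * s2 * tau⁻¹ = s0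
  t_add : ∀ a b : ℤ × ℤ, t (a + b) = t a * t b
  s1_t : ∀ m n : ℤ, s1 * t (m, n) * s1⁻¹ = t (n - m, n)
  s2_t : ∀ m n : ℤ, s2 * t (m, n) * s2⁻¹ = t (m, m - n)
  tau_t : ∀ m n : ℤ, tau * t (m, n) * tau⁻¹ = t (-n, m - n)
  s0_def : s0 = t (1, 1) * (s1 * s2 * s1)
  decomp : ∀ g : G, ∃ (m n : ℤ) (w : G) (j : Fin 3),
    w ∈ ({1, s1, s2, s1 * s2, s2 * s1, s1 * s2 * s1} : Set G) ∧
    g = t (m, n) * w * tau ^ (j : ℕ)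
  len_t : ∀ m n : ℤ,
    len (t (m, n)) = (2*m - n).natAbs + (2*n - m).natAbs + (m + n).natAbs
  len_t_s1 : ∀ m n : ℤ,
    len (t (m, n) * s1) = (2*m - n - 1).natAbs + (2*n - m).natAbs + (m + n).natAbs
  len_t_s2 : ∀ m n : ℤ,
    len (t (m, n) * s2) = (2*m - n).natAbs + (2*n - m - 1).natAbs + (m + n).natAbs
  len_t_s1s2 : ∀ m n : ℤ,
    len (t (m, n) * (s1 * s2)) =
      (2*m - n - 1).natAbs + (2*n - m).natAbs + (m + n - 1).natAbs
  len_t_s2s1 : ∀ m n : ℤ,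
    len (t (m, n) * (s2 * s1)) =
      (2*m - n).natAbs + (2*n - m - 1).natAbs + (m + n - 1).natAbs
  len_t_s1s2s1 : ∀ m n : ℤ,
    len (t (m, n) * (s1 * s2 * s1)) =
      (2*m - n - 1).natAbs + (2*n - m - 1).natAbs + (m + n - 1).natAbs
  len_mul_tau : ∀ g : G, len (g * tau) = len g
  len_tau_mul : ∀ g : G, len (tau * g) = len g

namespace A2Data

variable {G : Type*} [Group G] [A2Data G]

/-- The affine Weyl group `W_a`, the subgroup generated by the simple reflections. -/
def Wa (G : Type*) [Group G] [A2Data G] : Subgroup G :=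
  Subgroup.closure {s0, s1, s2}

/-- `y` is `W̃`-conjugate to `x`. -/
def ConjTo (x y : G) : Prop := ∃ g : G, g * x * g⁻¹ = y

/-- The `W̃`-conjugacy class of `x`. -/
def conjClass (x : G) : Set G := {y | ConjTo x y}

def IsConjClass (S : Set G) : Prop := ∃ x : G, S = conjClass x

/-- `n` is the minimal length of an element of `S`, attained on `S`. -/
def IsMinLen (S : Set G) (n : ℕ) : Prop :=
  (∃ x ∈ S, len x = n) ∧ ∀ x ∈ S, n ≤ len x

/-- The set of simple affine reflections. -/
def simples (G : Type*) [Group G] [A2Data G] : Set G := {s0, s1, s2}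

/-- The class `𝕆₁ = {t^{kα₁}s₁, t^{kα₂}s₂, t^{k(α₁+α₂)}s₁s₂s₁ : k ∈ ℤ}`. -/
def O1set (G : Type*) [Group G] [A2Data G] : Set G :=
  {x | ∃ k : ℤ, x = t (k, 0) * s1 ∨ x = t (0, k) * s2 ∨ x = t (k, k) * (s1 * s2 * s1)}

/-- The class `𝕆₂ = {t^λ s₁s₂, t^λ s₂s₁ : λ ∈ Q}`. -/
def O2set (G : Type*) [Group G] [A2Data G] : Set G :=
  {x | ∃ m n : ℤ, x = t (m, n) * (s1 * s2) ∨ x = t (m, n) * (s2 * s1)}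

/-- `C_i = {t^{kα₁+iα₂}s₁, t^{-iα₁+kα₂}s₂, t^{kα₁+(k-i)α₂}s₁s₂s₁ : k ∈ ℤ}`. -/
def Ciset (G : Type*) [Group G] [A2Data G] (i : ℤ) : Set G :=
  {x | ∃ k : ℤ, x = t (k, i) * s1 ∨ x = t (-i, k) * s2 ∨ x = t (k, k - i) * (s1 * s2 * s1)}

/-- `C'_i = {t^{kα₁-iα₂}s₁, t^{iα₁+kα₂}s₂, t^{(k-i)α₁+kα₂}s₁s₂s₁ : k ∈ ℤ}`. -/
def Ci'set (G : Type*) [Group G] [A2Data G] (i : ℤ) : Set G :=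
  {x | ∃ k : ℤ, x = t (k, -i) * s1 ∨ x = t (i, k) * s2 ∨ x = t (k - i, k) * (s1 * s2 * s1)}

/-- `𝕆_{id,τ} = {t^{mα₁+nα₂}τ, t^{mα₁+nα₂}s₁s₂τ : m, n ∈ ℤ}`. -/
def OIdtau (G : Type*) [Group G] [A2Data G] : Set G :=
  {x | ∃ m n : ℤ, x = t (m, n) * tau ∨ x = t (m, n) * (s1 * s2) * tau}

/-- `𝕆_{i,τ} = {t^{kα₁+iα₂}s₁s₂s₁τ, t^{(k+i-1)α₁+kα₂}s₂τ, t^{(1-i)α₁+kα₂}s₁τ : k ∈ ℤ}`. -/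
def Oitau (G : Type*) [Group G] [A2Data G] (i : ℤ) : Set G :=
  {x | ∃ k : ℤ, x = t (k, i) * (s1 * s2 * s1) * tau ∨ x = t (k + i - 1, k) * s2 * tau ∨
    x = t (1 - i, k) * s1 * tau}

/-- One non-length-increasing conjugation step by a simple reflection. -/
def StepTo (x y : G) : Prop :=
  ∃ s ∈ simples G, y = s * x * s ∧ len y ≤ len x

def RedTo : G → G → Prop := Relation.ReflTransGen StepTo

/-- The relation `≈` of the He–Nie reduction method. -/
def Approx (x y : G) : Prop := RedTo x y ∧ RedTo y x

/-- `f` satisfies the defining reduction recursion for the class polynomials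
`f_{w̃,𝕆}`, written as polynomials in the variable `X = v - v⁻¹`. -/
def ClassPolySystem (f : G → Set G → Polynomial ℤ) : Prop :=
  (∀ x : G, (∀ y : G, ConjTo x y → len x ≤ len y) →
    ∀ O : Set G, IsConjClass O → (x ∈ O → f x O = 1) ∧ (x ∉ O → f x O = 0)) ∧
  (∀ x x1 s : G, (∃ y : G, ConjTo x y ∧ len y < len x) →
    Approx x x1 → s ∈ simples G → len (s * x1 * s) < len x1 → len x1 = len x →
    ∀ O : Set G, f x O = Polynomial.X * f (s * x1) O + f (s * x1 * s) O)

/-- `y` is `δ`-conjugate to `x`. -/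
def DConjTo (δ : G ≃* G) (x y : G) : Prop := ∃ g : G, g * x * (δ g)⁻¹ = y

def dConjClass (δ : G ≃* G) (x : G) : Set G := {y | DConjTo δ x y}

def IsDConjClass (δ : G ≃* G) (S : Set G) : Prop := ∃ x : G, S = dConjClass δ x

def DStepTo (δ : G ≃* G) (x y : G) : Prop :=
  ∃ s ∈ simples G, y = s * x * (δ s)⁻¹ ∧ len y ≤ len x

def DRedTo (δ : G ≃* G) : G → G → Prop := Relation.ReflTransGen (DStepTo δ)

def DApprox (δ : G ≃* G) (x y : G) : Prop := DRedTo δ x y ∧ DRedTo δ y x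

/-- `f` satisfies the `δ`-twisted reduction recursion for the class polynomials
`f_{w̃,𝕆}`, written as polynomials in `X = v - v⁻¹`. -/
def DClassPolySystem (δ : G ≃* G) (f : G → Set G → Polynomial ℤ) : Prop :=
  (∀ x : G, (∀ y : G, DConjTo δ x y → len x ≤ len y) →
    ∀ O : Set G, IsDConjClass δ O → (x ∈ O → f x O = 1) ∧ (x ∉ O → f x O = 0)) ∧
  (∀ x x1 s : G, (∃ y : G, DConjTo δ x y ∧ len y < len x) →
    DApprox δ x x1 → s ∈ simples G → len (s * x1 * (δ s)⁻¹) < len x1 → len x1 = len x →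
    ∀ O : Set G, f x O = Polynomial.X * f (s * x1) O + f (s * x1 * (δ s)⁻¹) O)

/-- The diagram automorphism `δ` of `W̃` of type `A₂`: it fixes `s0`, swaps `s1` and
`s2`, inverts `tau`, swaps the coroot coordinates, and preserves lengths. -/
def IsDiagramAut (δ : G ≃* G) : Prop :=
  δ s0 = s0 ∧ δ s1 = s2 ∧ δ s2 = s1 ∧ δ tau = tau⁻¹ ∧
  (∀ m n : ℤ, δ (t (m, n)) = t (n, m)) ∧ ∀ g : G, len (δ g) = len g

/-- Elementary strong conjugation. -/
def ElemStrongConj (x y : G) : Prop :=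
  len x = len y ∧ ∃ g : G, y = g * x * g⁻¹ ∧
    (len (g * x) = len g + len x ∨ len (x * g⁻¹) = len g + len x)

/-- Strong conjugation: a chain of elementary strong conjugations. -/
def StrongConj : G → G → Prop := Relation.ReflTransGen ElemStrongConj

end A2Data

open A2Data

/-- The affine Hecke algebra attached to `W̃`, over `A = ℤ[v, v⁻¹]`, with standard
basis `T` and the quadratic and braid-type multiplication relations. -/
class HeckeData (G : Type*) [Group G] [A2Data G] (H : Type*) [Ring H]
    [Algebra (LaurentPolynomial ℤ) H] where
  T : G → H
  T_one : T 1 = 1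
  T_mul : ∀ x y : G, len (x * y) = len x + len y → T x * T y = T (x * y)
  T_quad : ∀ s ∈ simples G,
    (T s - algebraMap (LaurentPolynomial ℤ) H (LaurentPolynomial.T 1)) *
      (T s + algebraMap (LaurentPolynomial ℤ) H (LaurentPolynomial.T (-1))) = 0

/-- The commutator `ℤ[v,v⁻¹]`-submodule `[H̃, H̃]`. -/
noncomputable def commSub (H : Type*) [Ring H] [Algebra (LaurentPolynomial ℤ) H] :
    Submodule (LaurentPolynomial ℤ) H :=
  Submodule.span (LaurentPolynomial ℤ) {z : H | ∃ a b : H, z = a * b - b * a}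

/-- The `δ`-twisted commutator `ℤ[v,v⁻¹]`-submodule `[H̃, H̃]_δ`. -/
noncomputable def dCommSub {H : Type*} [Ring H] [Algebra (LaurentPolynomial ℤ) H]
    (δH : H →ₐ[LaurentPolynomial ℤ] H) : Submodule (LaurentPolynomial ℤ) H :=
  Submodule.span (LaurentPolynomial ℤ) {z : H | ∃ a b : H, z = a * b - b * (δH a)}

end A2

/-! Every element of `C_i` is `t^λ w` with `w ∈ {s₁, s₂, s₁s₂s₁}`, and pushing `s₁` or `τ` through
it with the defining relations gives back an element of `C_i`. As `s₁` and `τ` have finite order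
and generate `W̃`, every element of `W̃` is a product of them, so `C_i` is stable under
conjugation; translations together with `τ` connect every element of `C_i` to `t^{iα₂}s₁`.

The lengths of the elements of `C_i` are `|a| + |b| + |c|` with `|b| + |c| ≥ 3i` and
`a ≡ i + 1 (mod 2)`, so `3i` is a lower bound, improved by one when `i` is even because
`a` is then odd; `t^{⌈i/2⌉α₁ + iα₂}s₁` attains it. -/

section SemiconjSubmonoid

variable {M : Type*} [Monoid M]

def semiconjSubmonoid (S : Set M) : Submonoid M where
  carrier := {g | ∀ x ∈ S, ∃ y ∈ S, SemiconjBy g x y}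
  mul_mem' ha hb x hx := by
    obtain ⟨y, hy, hbxy⟩ := hb x hx
    obtain ⟨z, hz, hayz⟩ := ha y hy
    exact ⟨z, hz, hayz.mul_left hbxy⟩
  one_mem' x hx := ⟨x, hx, SemiconjBy.one_left x⟩

lemma conj_mem_of_mem_semiconjSubmonoid {G : Type*} [Group G] {S : Set G} {g x : G}
    (hg : g ∈ semiconjSubmonoid S) (hx : x ∈ S) : g * x * g⁻¹ ∈ S := by
  obtain ⟨y, hy, hgxy⟩ := hg x hx
  rwa [mul_inv_eq_iff_eq_mul.mpr hgxy.eq]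

end SemiconjSubmonoid

namespace A2.A2Data

variable {G : Type*} [Group G] [A2Data G]

lemma t_mul_t_mul (a b : ℤ × ℤ) (x : G) : (t a : G) * (t b * x) = t (a + b) * x := by
  rw [t_add]; group

lemma s1_mul_t (m n : ℤ) : (s1 : G) * t (m, n) = t (n - m, n) * s1 := by
  rw [← s1_t]; group

lemma s1_mul_t_mul (m n : ℤ) (x : G) : (s1 : G) * (t (m, n) * x) = t (n - m, n) * (s1 * x) := by
  rw [← s1_t]; group

lemma s2_mul_t_mul (m n : ℤ) (x : G) : (s2 : G) * (t (m, n) * x) = t (m, m - n) * (s2 * x) := by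
  rw [← s2_t]; group

lemma tau_mul_t_mul (m n : ℤ) (x : G) :
    (tau : G) * (t (m, n) * x) = t (-n, m - n) * (tau * x) := by
  rw [← tau_t]; group

lemma tau_mul_s1 : (tau : G) * s1 = s2 * tau := by
  rw [← tau_s1]; group

lemma tau_mul_s1_mul (x : G) : (tau : G) * (s1 * x) = s2 * (tau * x) := by
  rw [← tau_s1]; group

lemma tau_mul_s2_mul (x : G) :
    (tau : G) * (s2 * x) = t (1, 1) * (s1 * (s2 * (s1 * (tau * x)))) := by
  have h : (t (1, 1) : G) * (s1 * (s2 * (s1 * (tau * x)))) = s0 * tau * x := by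
    rw [s0_def]; group
  rw [h, ← tau_s2]; group

lemma tau_mul_s2 : (tau : G) * s2 = t (1, 1) * (s1 * (s2 * (s1 * tau))) := by
  simpa using tau_mul_s2_mul (1 : G)

lemma s1_mul_s1_mul (x : G) : (s1 : G) * (s1 * x) = x := by
  rw [← mul_assoc, s1_sq, one_mul]

lemma s2_mul_s2_mul (x : G) : (s2 : G) * (s2 * x) = x := by
  rw [← mul_assoc, s2_sq, one_mul]

lemma s2_mul_s1_mul_s2_mul (x : G) : (s2 : G) * (s1 * (s2 * x)) = s1 * (s2 * (s1 * x)) := by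
  have hs1 : (s1 : G)⁻¹ = s1 := inv_eq_of_mul_eq_one_right s1_sq
  have hs2 : (s2 : G)⁻¹ = s2 := inv_eq_of_mul_eq_one_right s2_sq
  have h : (s1 * s2 : G)⁻¹ = s1 * s2 * (s1 * s2) :=
    inv_eq_of_mul_eq_one_right (by rw [← pow_three, braid12])
  rw [mul_inv_rev, hs1, hs2] at h
  calc (s2 : G) * (s1 * (s2 * x)) = s2 * s1 * s2 * x := by group
    _ = s1 * s2 * s1 * (s2 * s2) * x := by rw [h]; group
    _ = s1 * (s2 * (s1 * x)) := by rw [s2_sq]; group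

lemma t_zsmul (n : ℤ) (v : ℤ × ℤ) : (t (n • v) : G) = t v ^ n :=
  map_zpow (MonoidHom.mk' (fun w : Multiplicative (ℤ × ℤ) => (t w.toAdd : G))
    fun _ _ => t_add _ _) (Multiplicative.ofAdd v) n

lemma t_mem_of_simples_mem {H : Subgroup G} (h0 : s0 ∈ H) (h1 : s1 ∈ H) (h2 : s2 ∈ H)
    (m n : ℤ) : (t (m, n) : G) ∈ H := by
  have h11 : (t (1, 1) : G) ∈ H := by
    have h : (t (1, 1) : G) = s0 * (s1 * s2 * s1)⁻¹ := by rw [s0_def]; group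
    rw [h]
    exact mul_mem h0 (inv_mem (mul_mem (mul_mem h1 h2) h1))
  have h01 : (t (0, 1) : G) ∈ H := by
    simpa [s1_t] using mul_mem (mul_mem h1 h11) (inv_mem h1)
  have h10 : (t (1, 0) : G) ∈ H := by
    simpa [s2_t] using mul_mem (mul_mem h2 h11) (inv_mem h2)
  have h : (t (m, n) : G) = t (1, 0) ^ m * t (0, 1) ^ n := by
    rw [← t_zsmul, ← t_zsmul, ← t_add]
    simp
  rw [h]
  exact mul_mem (zpow_mem h10 m) (zpow_mem h01 n)

lemma eq_top_of_s1_mem_of_tau_mem {H : Subgroup G} (h1 : s1 ∈ H) (hτ : tau ∈ H) : H = ⊤ := by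
  have h2 : s2 ∈ H := by
    rw [← tau_s1]
    exact mul_mem (mul_mem hτ h1) (inv_mem hτ)
  have h0 : s0 ∈ H := by
    rw [← tau_s2]
    exact mul_mem (mul_mem hτ h2) (inv_mem hτ)
  refine eq_top_iff.mpr fun g _ => ?_
  obtain ⟨m, n, w, j, hw, rfl⟩ := decomp g
  refine mul_mem (mul_mem (t_mem_of_simples_mem h0 h1 h2 m n) ?_) (pow_mem hτ _)
  simp only [Set.mem_insert_iff, Set.mem_singleton_iff] at hw
  rcases hw with rfl | rfl | rfl | rfl | rfl | rfl
  exacts [one_mem H, h1, h2, mul_mem h1 h2, mul_mem h2 h1, mul_mem (mul_mem h1 h2) h1]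

lemma submonoid_eq_top_of_s1_mem_of_tau_mem {M : Submonoid G} (h1 : s1 ∈ M) (hτ : tau ∈ M) :
    M = ⊤ := by
  have hτ_inv : (tau : G)⁻¹ = tau * tau :=
    inv_eq_of_mul_eq_one_right (by rw [← pow_three, tau_cube])
  have hs1_inv : (s1 : G)⁻¹ = s1 := inv_eq_of_mul_eq_one_right s1_sq
  have hclosure : Subgroup.closure {s1, tau} = (⊤ : Subgroup G) :=
    eq_top_of_s1_mem_of_tau_mem (Subgroup.subset_closure (by simp))
      (Subgroup.subset_closure (by simp))
  rw [eq_top_iff, ← Subgroup.top_toSubmonoid, ← hclosure, Subgroup.closure_toSubmonoid,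
    Submonoid.closure_le]
  simp only [Set.inv_insert, Set.inv_singleton, hτ_inv, hs1_inv, Set.union_subset_iff,
    Set.insert_subset_iff, Set.singleton_subset_iff, SetLike.mem_coe]
  exact ⟨⟨h1, hτ⟩, h1, mul_mem hτ hτ⟩

section

variable (i : ℤ)

lemma s1_semiconj_Ciset (k : ℤ) :
    SemiconjBy s1 (t (k, i) * s1 : G) (t (i - k, i) * s1) ∧
    SemiconjBy s1 (t (-i, k) * s2 : G) (t (k + i, k + i - i) * (s1 * s2 * s1)) ∧
    SemiconjBy s1 (t (k, k - i) * (s1 * s2 * s1) : G) (t (-i, k - i) * s2) := by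
  refine ⟨?_, ?_, ?_⟩ <;>
    simp only [SemiconjBy, mul_assoc, s1_mul_t_mul, s1_sq, s1_mul_s1_mul, mul_one] <;> ring_nf

lemma tau_semiconj_Ciset (k : ℤ) :
    SemiconjBy tau (t (k, i) * s1 : G) (t (-i, k - i) * s2) ∧
    SemiconjBy tau (t (-i, k) * s2 : G) (t (1 - k, 1 - k - i) * (s1 * s2 * s1)) ∧
    SemiconjBy tau (t (k, k - i) * (s1 * s2 * s1) : G) (t (i - k + 1, i) * s1) := by
  refine ⟨?_, ?_, ?_⟩ <;>
    simp only [SemiconjBy, mul_assoc, t_mul_t_mul, s2_mul_t_mul, tau_mul_t_mul, tau_mul_s1,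
      tau_mul_s1_mul, tau_mul_s2, tau_mul_s2_mul, s1_mul_s1_mul, s2_mul_s2_mul,
      s2_mul_s1_mul_s2_mul, Prod.mk_add_mk] <;> ring_nf

lemma t_semiconj_t_mul_s1 (a b k : ℤ) :
    SemiconjBy (t (a, b)) (t (k, i) * s1 : G) (t (k + 2 * a - b, i) * s1) := by
  simp only [SemiconjBy, mul_assoc, t_mul_t_mul, s1_mul_t, Prod.mk_add_mk]
  ring_nf

lemma Ciset_subset_Wa : Ciset G i ⊆ (Wa G : Set G) := by
  have h0 : (s0 : G) ∈ Wa G := Subgroup.subset_closure (by simp)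
  have h1 : (s1 : G) ∈ Wa G := Subgroup.subset_closure (by simp)
  have h2 : (s2 : G) ∈ Wa G := Subgroup.subset_closure (by simp)
  rintro x ⟨k, rfl | rfl | rfl⟩
  · exact mul_mem (t_mem_of_simples_mem h0 h1 h2 _ _) h1
  · exact mul_mem (t_mem_of_simples_mem h0 h1 h2 _ _) h2
  · exact mul_mem (t_mem_of_simples_mem h0 h1 h2 _ _) (mul_mem (mul_mem h1 h2) h1)

lemma semiconjSubmonoid_Ciset_eq_top : semiconjSubmonoid (Ciset G i) = ⊤ := by
  apply submonoid_eq_top_of_s1_mem_of_tau_mem <;> rintro x ⟨k, rfl | rfl | rfl⟩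
  · exact ⟨_, ⟨i - k, Or.inl rfl⟩, (s1_semiconj_Ciset i k).1⟩
  · exact ⟨_, ⟨k + i, Or.inr (Or.inr rfl)⟩, (s1_semiconj_Ciset i k).2.1⟩
  · exact ⟨_, ⟨k - i, Or.inr (Or.inl rfl)⟩, (s1_semiconj_Ciset i k).2.2⟩
  · exact ⟨_, ⟨k - i, Or.inr (Or.inl rfl)⟩, (tau_semiconj_Ciset i k).1⟩
  · exact ⟨_, ⟨1 - k, Or.inr (Or.inr rfl)⟩, (tau_semiconj_Ciset i k).2.1⟩
  · exact ⟨_, ⟨i - k + 1, Or.inl rfl⟩, (tau_semiconj_Ciset i k).2.2⟩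

lemma conj_mem_Ciset {x : G} (hx : x ∈ Ciset G i) (g : G) : g * x * g⁻¹ ∈ Ciset G i :=
  conj_mem_of_mem_semiconjSubmonoid (by simp [semiconjSubmonoid_Ciset_eq_top]) hx

lemma Ciset_eq_conjClass : Ciset G i = conjClass (t (0, i) * s1) := by
  have of_semiconj {g x y : G} (h : SemiconjBy g x y) : IsConj x y := ⟨toUnits g, h⟩
  have hA (k : ℤ) : IsConj (t (0, i) * s1 : G) (t (k, i) * s1) :=
    of_semiconj (by simpa using t_semiconj_t_mul_s1 i 0 (-k) 0)
  have hB (k : ℤ) : IsConj (t (0, i) * s1 : G) (t (-i, k) * s2) :=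
    (hA (k + i)).trans (of_semiconj (by simpa using (tau_semiconj_Ciset i (k + i)).1))
  have hC (k : ℤ) : IsConj (t (0, i) * s1 : G) (t (k, k - i) * (s1 * s2 * s1)) :=
    (hB (1 - k)).trans (of_semiconj (by simpa using (tau_semiconj_Ciset i (1 - k)).2.1))
  ext x
  constructor
  · rintro ⟨k, rfl | rfl | rfl⟩
    exacts [isConj_iff.mp (hA k), isConj_iff.mp (hB k), isConj_iff.mp (hC k)]
  · rintro ⟨g, rfl⟩
    exact conj_mem_Ciset i ⟨0, Or.inl rfl⟩ g

end

lemma minLen_le_natAbs_add_natAbs_add_natAbs (i : ℕ) {a b c : ℤ}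
    (hbc : 3 * i ≤ b.natAbs + c.natAbs) (ha : Even (a + i + 1)) :
    (if Odd i then 3 * i else 3 * i + 1) ≤ a.natAbs + b.natAbs + c.natAbs := by
  split_ifs with hi
  · omega
  · obtain ⟨j, rfl⟩ := Nat.not_odd_iff_even.mp hi
    obtain ⟨r, hr⟩ := ha
    omega

lemma minLen_le_len_of_mem_Ciset {i : ℕ} {x : G} (hx : x ∈ Ciset G i) :
    (if Odd i then 3 * i else 3 * i + 1) ≤ len x := by
  rcases hx with ⟨k, rfl | rfl | rfl⟩
  · rw [len_t_s1]
    exact minLen_le_natAbs_add_natAbs_add_natAbs i (by omega) ⟨k, by ring⟩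
  · have := minLen_le_natAbs_add_natAbs_add_natAbs i (a := 2 * k - -i - 1) (b := 2 * -i - k)
      (c := -i + k) (by omega) ⟨k + i, by ring⟩
    rw [len_t_s2]
    omega
  · have := minLen_le_natAbs_add_natAbs_add_natAbs i (a := k + (k - i) - 1)
      (b := 2 * k - (k - i) - 1) (c := 2 * (k - i) - k - 1) (by omega) ⟨k, by ring⟩
    rw [len_t_s1s2s1]
    omega

lemma len_t_s1_eq_minLen (i : ℕ) :
    len (t (((i + 1) / 2 : ℕ), i) * s1 : G) = if Odd i then 3 * i else 3 * i + 1 := by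
  rw [len_t_s1]
  split_ifs with hi
  · obtain ⟨j, rfl⟩ := hi
    omega
  · obtain ⟨j, rfl⟩ := Nat.not_odd_iff_even.mp hi
    omega

end A2.A2Data

open A2 A2Data in
theorem statement_4_general {G : Type*} [Group G] [A2Data G] (i : ℕ) :
    Ciset G (i : ℤ) ⊆ (Wa G : Set G) ∧
    IsConjClass (Ciset G (i : ℤ)) ∧
    IsMinLen (Ciset G (i : ℤ)) (if Odd i then 3 * i else 3 * i + 1) :=
  ⟨Ciset_subset_Wa i, ⟨_, Ciset_eq_conjClass i⟩,
    ⟨_, ⟨_, Or.inl rfl⟩, len_t_s1_eq_minLen i⟩, fun _ => minLen_le_len_of_mem_Ciset⟩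

open A2 A2Data in
/-- For `i ≥ 1`, the set `C_i` is a single `W̃`-conjugacy class contained in `W_a`,
with minimal length `3i` if `i` is odd and `3i + 1` if `i` is even. -/
theorem statement_4 {G : Type*} [Group G] [A2Data G] (i : ℕ) (hi : 1 ≤ i) :
    Ciset G (i : ℤ) ⊆ (Wa G : Set G) ∧
    IsConjClass (Ciset G (i : ℤ)) ∧
    IsMinLen (Ciset G (i : ℤ)) (if Odd i then 3 * i else 3 * i + 1) :=
  statement_4_general i
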